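/- arXiv:2309.14017 — 4 statements merged into one kernel-verified Lean document; each statement's English description precedes it below -/
import Mathlib

section
/- Let $\mathcal{L}$ be a finite simplicial complex on a linearly ordered vertex set, endowed with the lexicographical partial matching. Then a simplex $t \in \mathcal{L}$ with minimal vertex $i$ and $|t| \geq 2$ is matched with one of its faces if and only if for all $j < i$, $(t \setminus \{i\}) \cup \{j\} \notin \mathcal{L}$. -/
/-- `L` is a simplicial complex on the vertex set `{1, …, n}`: simplices are nonempty
subsets of `[n]`, all singletons are present, and `L` is closed under nonempty subsets. -/
def IsComplexOn (n : ℕ) (L : Finset (Finset ℕ)) : Prop :=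
  (∀ s ∈ L, s.Nonempty) ∧ (∀ s ∈ L, s ⊆ Finset.Icc 1 n) ∧
  (∀ v ∈ Finset.Icc 1 n, ({v} : Finset ℕ) ∈ L) ∧
  (∀ s ∈ L, ∀ u ⊆ s, u.Nonempty → u ∈ L)

/-- `I_L(s) = { j | j < min(s) and s ∪ {j} ∈ L }`. -/
def lexIdx (L : Finset (Finset ℕ)) (s : Finset ℕ) : Set ℕ :=
  {j | (∀ v ∈ s, j < v) ∧ insert j s ∈ L}

/-- The lexicographical matching pairs `s` with `s ∪ {min I_L(s)}` whenever
`I_L(s)` is nonempty. -/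
def LexMatched (L : Finset (Finset ℕ)) (s t : Finset ℕ) : Prop :=
  s ∈ L ∧ (lexIdx L s).Nonempty ∧ t = insert (sInf (lexIdx L s)) s

theorem lex_matched_with_face_iff
    (n : ℕ) (L : Finset (Finset ℕ)) (hL : IsComplexOn n L)
    (t : Finset ℕ) (ht : t ∈ L) (htne : t.Nonempty) (hcard : 2 ≤ t.card)
    (i : ℕ) (hi : i = t.min' htne) :
    (∃ s, LexMatched L s t) ↔ ∀ j, j < i → insert j (t.erase i) ∉ L := by
  obtain ⟨hne, hsub, hsing, hclosed⟩ := hL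
  constructor
  · rintro ⟨s, hsL, hI, rfl⟩ j hj hmem
    set m := sInf (lexIdx L s) with hm
    have hmI : m ∈ lexIdx L s := Nat.sInf_mem hI
    have hms : m ∉ s := fun h => lt_irrefl m (hmI.1 m h)
    have hmin : i = m := by
      rw [hi]
      apply le_antisymm
      · exact Finset.min'_le _ m (Finset.mem_insert_self _ _)
      · apply Finset.le_min'
        intro y hy
        rcases Finset.mem_insert.1 hy with rfl | hy
        · exact le_refl _
        · exact (hmI.1 y hy).le
    have herase : (insert m s).erase i = s := by
      rw [hmin, Finset.erase_insert hms]
    rw [herase] at hmem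
    have hjI : j ∈ lexIdx L s :=
      ⟨fun v hv => lt_trans (hmin ▸ hj) (hmI.1 v hv), hmem⟩
    have := Nat.sInf_le hjI
    omega
  · intro h
    have hit : i ∈ t := hi ▸ t.min'_mem htne
    set s := t.erase i with hs
    have hsne : s.Nonempty := by
      rw [← Finset.card_pos, hs, Finset.card_erase_of_mem hit]; omega
    have hsL : s ∈ L := hclosed t ht s (Finset.erase_subset _ _) hsne
    have hiI : i ∈ lexIdx L s := by
      refine ⟨fun v hv => ?_, ?_⟩
      · obtain ⟨hne', hvt⟩ := Finset.mem_erase.1 hv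
        have := t.min'_le v hvt
        omega
      · rw [hs, Finset.insert_erase hit]; exact ht
    have hInf : sInf (lexIdx L s) = i := by
      apply le_antisymm (Nat.sInf_le hiI)
      by_contra hlt
      push_neg at hlt
      have hm := Nat.sInf_mem (⟨i, hiI⟩ : (lexIdx L s).Nonempty)
      exact h _ hlt hm.2
    exact ⟨s, hsL, ⟨i, hiI⟩, by rw [hInf, hs, Finset.insert_erase hit]⟩
end

section
/- The lexicographical matching on any finite simplicial complex with linearly ordered vertices is an acyclic partial matching: every simplex appears in at most one pair, and every V-path $(s_1 \subseteq t_1 \supseteq s_2 \subseteq t_2 \supseteq \cdots \supseteq s_k \subseteq t_k)$ with distinct simplices, $(s_i, t_i)$ in the matching, and $|t_i| - |s_{i+1}| = 1$, satisfies $k = 1$ or $s_1 \not\subseteq t_k$. -/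
lemma lexIdx_sInf_mem {L : Finset (Finset ℕ)} {s t : Finset ℕ} (h : LexMatched L s t) :
    sInf (lexIdx L s) ∈ lexIdx L s := Nat.sInf_mem h.2.1

lemma matched_notMem {L : Finset (Finset ℕ)} {s t : Finset ℕ} (h : LexMatched L s t) :
    sInf (lexIdx L s) ∉ s := fun hm => lt_irrefl _ ((lexIdx_sInf_mem h).1 _ hm)

/-- The upper simplex of a matched pair has empty `lexIdx`. -/
lemma matched_top_empty {L : Finset (Finset ℕ)}
    (hdown : ∀ s ∈ L, ∀ u ⊆ s, u.Nonempty → u ∈ L)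
    {s t : Finset ℕ} (h : LexMatched L s t) : ¬ (lexIdx L t).Nonempty := by
  rintro ⟨j, hj⟩
  have hm := lexIdx_sInf_mem h
  set m := sInf (lexIdx L s) with hmdef
  have ht := h.2.2
  have hjm : j < m := hj.1 m (by rw [ht]; exact Finset.mem_insert_self _ _)
  have hjI : j ∈ lexIdx L s := by
    constructor
    · intro v hv; exact hj.1 v (by rw [ht]; exact Finset.mem_insert_of_mem hv)
    · have hsub : insert j s ⊆ insert j t := by
        apply Finset.insert_subset_insert
        rw [ht]; exact Finset.subset_insert _ _
      exact hdown _ hj.2 _ hsub (Finset.insert_nonempty _ _)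
  exact absurd (Nat.sInf_le hjI) (not_le.mpr hjm)

theorem lex_matching_is_acyclic_partial_matching
    (n : ℕ) (L : Finset (Finset ℕ)) (hL : IsComplexOn n L) :
    -- every simplex appears in at most one pair of the matching
    (∀ s t s' t', LexMatched L s t → LexMatched L s' t' →
      (s = s' ∨ s = t' ∨ t = s' ∨ t = t') → s = s' ∧ t = t') ∧
    -- every V-path with distinct simplices is a gradient path
    (∀ (k : ℕ) (s t : ℕ → Finset ℕ), 1 ≤ k →
      (∀ i, i < k → LexMatched L (s i) (t i)) →
      (∀ i, i + 1 < k → s (i + 1) ⊆ t i ∧ (t i).card = (s (i + 1)).card + 1) →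
      (∀ i j, i < k → j < k → i ≠ j → s i ≠ s j) →
      (∀ i j, i < k → j < k → i ≠ j → t i ≠ t j) →
      (∀ i j, i < k → j < k → s i ≠ t j) →
      k = 1 ∨ ¬ s 0 ⊆ t (k - 1)) := by
  have hdown := hL.2.2.2
  constructor
  · rintro s t s' t' h h' (rfl | rfl | rfl | htt)
    · exact ⟨rfl, by rw [h.2.2, h'.2.2]⟩
    · exact absurd h.2.1 (matched_top_empty hdown h')
    · exact absurd h'.2.1 (matched_top_empty hdown h)
    · -- t = t'
      have ht := h.2.2
      have ht' := h'.2.2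
      set m := sInf (lexIdx L s) with hmdef
      set m' := sInf (lexIdx L s') with hmdef'
      have hmm' : m = m' := by
        by_contra hne
        have h1 : m ∈ s' := by
          have : m ∈ insert m' s' := by rw [← ht', ← htt, ht]; exact Finset.mem_insert_self _ _
          rcases Finset.mem_insert.mp this with h2 | h2
          · exact absurd h2 hne
          · exact h2
        have h2 : m' ∈ s := by
          have : m' ∈ insert m s := by rw [← ht, htt, ht']; exact Finset.mem_insert_self _ _
          rcases Finset.mem_insert.mp this with h2 | h2
          · exact absurd h2.symm hne
          · exact h2
        have := (lexIdx_sInf_mem h').1 m h1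
        have := (lexIdx_sInf_mem h).1 m' h2
        omega
      have hs : s = s' := by
        have e1 : (insert m s).erase m = s := Finset.erase_insert (matched_notMem h)
        have e2 : (insert m' s').erase m' = s' := Finset.erase_insert (matched_notMem h')
        rw [← e1, ← e2, hmm', ← ht', ← htt, ht, hmm']
      exact ⟨hs, htt⟩
  · intro k s t hk hmatch hstep hsne _htne _hstne
    by_cases hk1 : k = 1
    · exact Or.inl hk1
    right
    intro hsub
    obtain ⟨r, rfl⟩ : ∃ r, k = r + 2 := ⟨k - 2, by omega⟩
    -- abbreviation for the matched vertex
    set m : ℕ → ℕ := fun i => sInf (lexIdx L (s i)) with hmdef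
    have hMem : ∀ i, i < r + 2 → m i ∈ lexIdx L (s i) :=
      fun i hi => lexIdx_sInf_mem (hmatch i hi)
    have hT : ∀ i, i < r + 2 → t i = insert (m i) (s i) := fun i hi => (hmatch i hi).2.2
    have hNot : ∀ i, i < r + 2 → m i ∉ s i := fun i hi => matched_notMem (hmatch i hi)
    have hcardT : ∀ i, i < r + 2 → (t i).card = (s i).card + 1 := by
      intro i hi
      rw [hT i hi, Finset.card_insert_of_notMem (hNot i hi)]
    -- step (a): the matched vertex survives to the next simplex
    have hstepA : ∀ i, i + 1 < r + 2 → m i ∈ s (i + 1) := by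
      intro i hi
      by_contra hni
      have hsub1 : s (i + 1) ⊆ insert (m i) (s i) := by
        rw [← hT i (by omega)]; exact (hstep i hi).1
      have hsub2 : s (i + 1) ⊆ s i := by
        intro x hx
        rcases Finset.mem_insert.mp (hsub1 hx) with h2 | h2
        · exact absurd (h2 ▸ hx) hni
        · exact h2
      have hcards : (s i).card ≤ (s (i + 1)).card := by
        have := (hstep i hi).2
        have := hcardT i (by omega)
        omega
      exact hsne (i + 1) i hi (by omega) (by omega) (Finset.eq_of_subset_of_card_le hsub2 hcards)
    -- step (b): everything in the next simplex is ≥ m i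
    have hstepB : ∀ i, i + 1 < r + 2 → ∀ v ∈ s (i + 1), m i ≤ v := by
      intro i hi v hv
      have hsub1 : s (i + 1) ⊆ insert (m i) (s i) := by
        rw [← hT i (by omega)]; exact (hstep i hi).1
      rcases Finset.mem_insert.mp (hsub1 hv) with h2 | h2
      · omega
      · exact le_of_lt ((hMem i (by omega)).1 v h2)
    -- m is decreasing, bounded by m 0
    have hdec : ∀ j, j + 1 < r + 2 → m (j + 1) < m j := by
      intro j hj
      exact (hMem (j + 1) hj).1 (m j) (hstepA j hj)
    have hle : ∀ j, j < r + 2 → m j ≤ m 0 := by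
      intro j
      induction j with
      | zero => intro _; exact le_rfl
      | succ p ih => intro hp; exact le_trans (le_of_lt (hdec p hp)) (ih (by omega))
    -- cards of the s's are constant
    have hcardS : ∀ j, j < r + 2 → (s j).card = (s 0).card := by
      intro j
      induction j with
      | zero => intro _; rfl
      | succ p ih =>
        intro hp
        have h1 := (hstep p hp).2
        have h2 := hcardT p (by omega)
        have := ih (by omega)
        omega
    -- the final contradiction
    have hsub' : s 0 ⊆ t (r + 1) := hsub
    have hbmem : m r ∈ s (r + 1) := hstepA r (by omega)
    have hab : m (r + 1) < m r := hdec r (by omega)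
    have hbm0 : m r ≤ m 0 := hle r (by omega)
    have hbig : ∀ v ∈ s 0, m 0 < v := (hMem 0 (by omega)).1
    have hbn : m r ∉ s 0 := fun hc => by have := hbig _ hc; omega
    have han : m (r + 1) ∉ s 0 := fun hc => by have := hbig _ hc; omega
    have hbT : m r ∈ t (r + 1) := by
      rw [hT (r + 1) (by omega)]; exact Finset.mem_insert_of_mem hbmem
    have haT : m (r + 1) ∈ t (r + 1) := by
      rw [hT (r + 1) (by omega)]; exact Finset.mem_insert_self _ _
    have hins : insert (m r) (s 0) ⊆ t (r + 1) := Finset.insert_subset hbT hsub'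
    have hcard : (t (r + 1)).card ≤ (insert (m r) (s 0)).card := by
      rw [Finset.card_insert_of_notMem hbn]
      have h1 := hcardT (r + 1) (by omega)
      have h2 := hcardS (r + 1) (by omega)
      omega
    have heq : insert (m r) (s 0) = t (r + 1) := Finset.eq_of_subset_of_card_le hins hcard
    rcases Finset.mem_insert.mp (heq ▸ haT) with h2 | h2
    · omega
    · exact han h2
end

section
/- For fixed positive integers $i \leq m_i \leq m_j$ and $k' \geq 0$ with $k' + 1 \leq \min(m_i, m_j)$, and for any $n \geq m_i + m_j$: the number of $m_j$-subsets $\psi$ of $[n]$ intersecting a fixed $m_i$-subset $\phi$ in at least $k'+1$ elements satisfies $\sum_{m=k'+1}^{\min(m_i,m_j)} \binom{m_i}{m}\binom{n - m_i}{m_j - m} \leq n^{m_j - 1 - k'} \cdot \frac{m_i^{m_i + 1}}{(k'+1)!}$. -/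
theorem dependency_neighbourhood_size_bound
    (k' mi mj n : ℕ) (hmi : 1 ≤ mi) (hij : mi ≤ mj)
    (hk : k' + 1 ≤ min mi mj) (hn : mi + mj ≤ n) :
    (∑ m ∈ Finset.Icc (k' + 1) (min mi mj),
        (mi.choose m : ℝ) * ((n - mi).choose (mj - m) : ℝ)) ≤
      (n : ℝ) ^ (mj - 1 - k') * (mi : ℝ) ^ (mi + 1) / ((k' + 1).factorial : ℝ) := by
  have hmin : min mi mj = mi := min_eq_left hij
  rw [hmin] at hk ⊢
  have hn1 : 1 ≤ n := le_trans (by omega) hn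
  set B : ℝ := (n : ℝ) ^ (mj - 1 - k') * (mi : ℝ) ^ mi / ((k' + 1).factorial : ℝ) with hB
  have hterm : ∀ m ∈ Finset.Icc (k' + 1) mi,
      (mi.choose m : ℝ) * ((n - mi).choose (mj - m) : ℝ) ≤ B := by
    intro m hm
    rw [Finset.mem_Icc] at hm
    have h1 : (mi.choose m : ℝ) ≤ (mi : ℝ) ^ mi / ((k' + 1).factorial : ℝ) := by
      calc (mi.choose m : ℝ) ≤ (mi : ℝ) ^ m / (m.factorial : ℝ) := by
            simpa using Nat.choose_le_pow_div (α := ℝ) m mi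
        _ ≤ (mi : ℝ) ^ mi / ((k' + 1).factorial : ℝ) := by
            apply div_le_div₀ (by positivity)
            · exact pow_le_pow_right₀ (by exact_mod_cast hmi) hm.2
            · positivity
            · exact_mod_cast Nat.factorial_le hm.1
    have h2 : ((n - mi).choose (mj - m) : ℝ) ≤ (n : ℝ) ^ (mj - 1 - k') := by
      calc ((n - mi).choose (mj - m) : ℝ) ≤ ((n - mi : ℕ) : ℝ) ^ (mj - m) := by
            exact_mod_cast Nat.choose_le_pow (n - mi) (mj - m)
        _ ≤ (n : ℝ) ^ (mj - m) := by
            apply pow_le_pow_left₀ (by positivity)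
            exact_mod_cast Nat.sub_le n mi
        _ ≤ (n : ℝ) ^ (mj - 1 - k') := by
            apply pow_le_pow_right₀ (by exact_mod_cast hn1)
            omega
    calc (mi.choose m : ℝ) * ((n - mi).choose (mj - m) : ℝ)
        ≤ ((mi : ℝ) ^ mi / ((k' + 1).factorial : ℝ)) * (n : ℝ) ^ (mj - 1 - k') :=
          mul_le_mul h1 h2 (by positivity) (by positivity)
      _ = B := by rw [hB]; ring
  calc (∑ m ∈ Finset.Icc (k' + 1) mi,
        (mi.choose m : ℝ) * ((n - mi).choose (mj - m) : ℝ))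
      ≤ (Finset.Icc (k' + 1) mi).card • B := Finset.sum_le_card_nsmul _ _ _ hterm
    _ = ((mi - k' : ℕ) : ℝ) * B := by
        have h : mi + 1 - (k' + 1) = mi - k' := by omega
        rw [Nat.card_Icc, h, nsmul_eq_mul]
    _ ≤ (mi : ℝ) * B := by
        apply mul_le_mul_of_nonneg_right _ (by positivity)
        exact_mod_cast Nat.sub_le mi k'
    _ = (n : ℝ) ^ (mj - 1 - k') * (mi : ℝ) ^ (mi + 1) / ((k' + 1).factorial : ℝ) := by
        rw [hB, pow_succ]; ring
end

section
/- Fix integers $m \geq k'+1 \geq 1$. For a sum of identically-distributed random variables $Y_s$ indexed by $s \in \binom{[n]}{m}$ such that $\mathrm{Cov}(Y_s, Y_u) \geq \alpha > 0$ whenever $|s \cap u| \geq k'+1$ and $\mathrm{Cov}(Y_s, Y_u) = 0$ otherwise, the variance $\sigma^2 = \mathrm{Var}(\sum_s Y_s)$ satisfies $\sigma^2 \geq \frac{n^{2m-1-k'}\, m^{k'+1-m}}{(2m-1-k')^{m-1-k'}\,(k'+1)^{k'+1}}\,\alpha$ for all $n \geq 2m$. -/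
open Finset

-- factorial as reversed product
lemma fact_eq_prod_sub (k : ℕ) : k.factorial = ∏ i ∈ range k, (k - i) := by
  induction k with
  | zero => simp
  | succ k ih =>
    rw [Finset.prod_range_succ', Nat.factorial_succ]
    simp only [Nat.succ_sub_succ]
    rw [← ih, Nat.sub_zero, mul_comm]

lemma pow_le_pow_mul_choose {n k : ℕ} (h : k ≤ n) : n ^ k ≤ k ^ k * n.choose k := by
  have key : n ^ k * k.factorial ≤ k ^ k * n.descFactorial k := by
    have e1 : n ^ k = ∏ _i ∈ range k, n := by rw [Finset.prod_const, card_range]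
    have e2 : k ^ k = ∏ _i ∈ range k, k := by rw [Finset.prod_const, card_range]
    rw [fact_eq_prod_sub, Nat.descFactorial_eq_prod_range, e1, e2,
      ← Finset.prod_mul_distrib, ← Finset.prod_mul_distrib]
    refine Finset.prod_le_prod' fun i hi => ?_
    rw [Finset.mem_range] at hi
    rw [Nat.mul_sub, Nat.mul_sub]
    exact Nat.sub_le_sub_left (Nat.mul_le_mul_right i h) _ |>.trans
      (le_of_eq (by rw [mul_comm n k]))
  rw [Nat.descFactorial_eq_factorial_mul_choose, ← mul_assoc, mul_comm (k^k) (k.factorial),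
    mul_assoc] at key
  exact Nat.le_of_mul_le_mul_left (by linarith [key]) (Nat.factorial_pos k)

lemma count_inner (n m l : ℕ) (hl : l ≤ m) (hmn : m ≤ n) (s : Finset ℕ)
    (hs : s ∈ Finset.powersetCard m (Finset.Icc 1 n)) :
    m.choose l * (n - m).choose (m - l) ≤
      ((Finset.powersetCard m (Finset.Icc 1 n)).filter
        (fun u => l ≤ (s ∩ u).card)).card := by
  rw [Finset.mem_powersetCard] at hs
  obtain ⟨hsub, hcard⟩ := hs
  have hIcc : (Finset.Icc 1 n).card = n := by rw [Nat.card_Icc]; omega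
  set D := (Finset.powersetCard l s) ×ˢ (Finset.powersetCard (m - l) (Finset.Icc 1 n \ s))
    with hD
  have hDcard : D.card = m.choose l * (n - m).choose (m - l) := by
    rw [hD, Finset.card_product, Finset.card_powersetCard, Finset.card_powersetCard, hcard,
      Finset.card_sdiff_of_subset hsub, hIcc, hcard]
  rw [← hDcard]
  apply Finset.card_le_card_of_injOn (fun p => p.1 ∪ p.2)
  · rintro ⟨t, v⟩ hp
    rw [hD, Finset.mem_coe, Finset.mem_product, Finset.mem_powersetCard, Finset.mem_powersetCard] at hp
    obtain ⟨⟨hts, htc⟩, ⟨hvs, hvc⟩⟩ := hp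
    have hdisj : Disjoint t v := by
      rw [Finset.disjoint_left]
      intro x hxt hxv
      exact (Finset.mem_sdiff.mp (hvs hxv)).2 (hts hxt)
    rw [Finset.mem_coe, Finset.mem_filter, Finset.mem_powersetCard]
    refine ⟨⟨Finset.union_subset (hts.trans hsub) (hvs.trans Finset.sdiff_subset), ?_⟩, ?_⟩
    · rw [Finset.card_union_of_disjoint hdisj, htc, hvc]; omega
    · calc l = t.card := htc.symm
        _ ≤ (s ∩ (t ∪ v)).card := Finset.card_le_card
            (Finset.subset_inter hts Finset.subset_union_left)
  · rintro ⟨t, v⟩ hp ⟨t', v'⟩ hp' heq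
    simp only [hD, Finset.mem_coe, Finset.mem_product, Finset.mem_powersetCard] at hp hp'
    obtain ⟨⟨hts, -⟩, ⟨hvs, -⟩⟩ := hp
    obtain ⟨⟨hts', -⟩, ⟨hvs', -⟩⟩ := hp'
    have key : ∀ (t v : Finset ℕ), t ⊆ s → v ⊆ Finset.Icc 1 n \ s →
        (t ∪ v) ∩ s = t ∧ (t ∪ v) \ s = v := by
      intro t v ht hv
      have hvs0 : v ∩ s = ∅ := by
        rw [← Finset.disjoint_iff_inter_eq_empty, Finset.disjoint_left]
        intro x hxv
        exact (Finset.mem_sdiff.mp (hv hxv)).2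
      constructor
      · rw [Finset.union_inter_distrib_right, Finset.inter_eq_left.mpr ht, hvs0,
          Finset.union_empty]
      · rw [Finset.union_sdiff_distrib, Finset.sdiff_eq_empty_iff_subset.mpr ht,
          Finset.empty_union, Finset.sdiff_eq_self_iff_disjoint.mpr
            (Finset.disjoint_iff_inter_eq_empty.mpr hvs0)]
    obtain ⟨e1, e2⟩ := key t v hts hvs
    obtain ⟨e1', e2'⟩ := key t' v' hts' hvs'
    have : t ∪ v = t' ∪ v' := heq
    rw [Prod.mk.injEq]
    constructor
    · rw [← e1, ← e1', this]
    · rw [← e2, ← e2', this]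

open MeasureTheory ProbabilityTheory

open MeasureTheory ProbabilityTheory

theorem variance_lower_bound_dissociated_sum
    {Ω : Type*} [MeasurableSpace Ω] (P : Measure Ω) [IsProbabilityMeasure P]
    (n m k' : ℕ) (hm : k' + 1 ≤ m) (hn : 2 * m ≤ n)
    (α : ℝ) (hα : 0 < α)
    (Y : Finset ℕ → Ω → ℝ)
    (hY : ∀ s, MemLp (Y s) 2 P)
    (hIdent : ∀ s u, IdentDistrib (Y s) (Y u) P P)
    (hcovPos : ∀ s ∈ Finset.powersetCard m (Finset.Icc 1 n),
      ∀ u ∈ Finset.powersetCard m (Finset.Icc 1 n), k' + 1 ≤ (s ∩ u).card →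
        α ≤ (∫ ω, Y s ω * Y u ω ∂P) - (∫ ω, Y s ω ∂P) * (∫ ω, Y u ω ∂P))
    (hcovZero : ∀ s ∈ Finset.powersetCard m (Finset.Icc 1 n),
      ∀ u ∈ Finset.powersetCard m (Finset.Icc 1 n), (s ∩ u).card < k' + 1 →
        (∫ ω, Y s ω * Y u ω ∂P) - (∫ ω, Y s ω ∂P) * (∫ ω, Y u ω ∂P) = 0) :
    (n : ℝ) ^ (2 * m - 1 - k') * α /
        (((2 * m - 1 - k' : ℕ) : ℝ) ^ (m - 1 - k') * ((k' + 1 : ℕ) : ℝ) ^ (k' + 1) *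
          (m : ℝ) ^ (m - 1 - k')) ≤
      (∫ ω, (∑ s ∈ Finset.powersetCard m (Finset.Icc 1 n), Y s ω) ^ 2 ∂P) -
        (∫ ω, ∑ s ∈ Finset.powersetCard m (Finset.Icc 1 n), Y s ω ∂P) ^ 2 := by
  classical
  set S := Finset.powersetCard m (Finset.Icc 1 n) with hS
  set l := k' + 1 with hl
  set a := m - 1 - k' with ha
  set K := 2 * m - 1 - k' with hK
  have hmn : m ≤ n := by omega
  have hIcc : (Finset.Icc 1 n).card = n := by rw [Nat.card_Icc]; omega
  have hScard : S.card = n.choose m := by rw [hS, Finset.card_powersetCard, hIcc]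
  -- integrability of products
  have hmul : ∀ s u : Finset ℕ, Integrable (fun ω => Y s ω * Y u ω) P := by
    intro s u
    have h1 : Integrable (fun ω => (Y s ω + Y u ω) ^ 2) P := by
      have := ((hY s).add (hY u)).integrable_sq
      simpa using this
    have h2 := (hY s).integrable_sq
    have h3 := (hY u).integrable_sq
    have heq : (fun ω => Y s ω * Y u ω) =
        fun ω => (((Y s ω + Y u ω) ^ 2 - Y s ω ^ 2) - Y u ω ^ 2) / 2 := by
      funext ω; ring
    rw [heq]
    exact ((h1.sub h2).sub h3).div_const 2
  have hint : ∀ s : Finset ℕ, Integrable (Y s) P := fun s => (hY s).integrable one_le_two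
  -- expand the variance as a double sum of covariances
  have hVar : (∫ ω, (∑ s ∈ S, Y s ω) ^ 2 ∂P) - (∫ ω, ∑ s ∈ S, Y s ω ∂P) ^ 2 =
      ∑ s ∈ S, ∑ u ∈ S,
        ((∫ ω, Y s ω * Y u ω ∂P) - (∫ ω, Y s ω ∂P) * (∫ ω, Y u ω ∂P)) := by
    have e1 : (∫ ω, (∑ s ∈ S, Y s ω) ^ 2 ∂P)
        = ∑ s ∈ S, ∑ u ∈ S, ∫ ω, Y s ω * Y u ω ∂P := by
      have hpt : ∀ ω, (∑ s ∈ S, Y s ω) ^ 2 = ∑ s ∈ S, ∑ u ∈ S, Y s ω * Y u ω := by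
        intro ω; rw [sq, Finset.sum_mul_sum]
      simp_rw [hpt]
      rw [MeasureTheory.integral_finset_sum _
        (fun s _ => integrable_finset_sum _ (fun u _ => hmul s u))]
      exact Finset.sum_congr rfl fun s _ =>
        MeasureTheory.integral_finset_sum _ (fun u _ => hmul s u)
    have e2 : (∫ ω, ∑ s ∈ S, Y s ω ∂P) = ∑ s ∈ S, ∫ ω, Y s ω ∂P :=
      MeasureTheory.integral_finset_sum _ (fun s _ => hint s)
    rw [e1, e2, sq, Finset.sum_mul_sum, ← Finset.sum_sub_distrib]
    exact Finset.sum_congr rfl fun s _ => by rw [← Finset.sum_sub_distrib]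
  rw [hVar]
  -- lower bound each inner sum
  have hterm : ∀ s ∈ S, (α * (m.choose l * (n - m).choose (m - l)) : ℝ) ≤
      ∑ u ∈ S, ((∫ ω, Y s ω * Y u ω ∂P) - (∫ ω, Y s ω ∂P) * (∫ ω, Y u ω ∂P)) := by
    intro s hs
    rw [← Finset.sum_filter_add_sum_filter_not S (fun u => l ≤ (s ∩ u).card)]
    have hz : ∑ u ∈ S.filter (fun u => ¬ l ≤ (s ∩ u).card),
        ((∫ ω, Y s ω * Y u ω ∂P) - (∫ ω, Y s ω ∂P) * (∫ ω, Y u ω ∂P)) = 0 := by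
      refine Finset.sum_eq_zero fun u hu => ?_
      have hu' := Finset.mem_filter.mp hu
      exact hcovZero s hs u hu'.1 (Nat.lt_of_not_le hu'.2)
    rw [hz, add_zero]
    have hcount := count_inner n m l hm hmn s hs
    calc (α * (m.choose l * (n - m).choose (m - l)) : ℝ)
        ≤ α * ((S.filter (fun u => l ≤ (s ∩ u).card)).card : ℝ) := by
          apply mul_le_mul_of_nonneg_left _ hα.le
          exact_mod_cast hcount
      _ ≤ ∑ u ∈ S.filter (fun u => l ≤ (s ∩ u).card),
            ((∫ ω, Y s ω * Y u ω ∂P) - (∫ ω, Y s ω ∂P) * (∫ ω, Y u ω ∂P)) := by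
          rw [mul_comm, ← nsmul_eq_mul]
          refine Finset.card_nsmul_le_sum _ _ _ fun u hu => ?_
          have hu' := Finset.mem_filter.mp hu
          exact hcovPos s hs u hu'.1 hu'.2
  have total : ((n.choose m : ℝ)) * (α * (m.choose l * (n - m).choose (m - l))) ≤
      ∑ s ∈ S, ∑ u ∈ S,
        ((∫ ω, Y s ω * Y u ω ∂P) - (∫ ω, Y s ω ∂P) * (∫ ω, Y u ω ∂P)) := by
    have h := Finset.card_nsmul_le_sum S _ _ hterm
    rw [hScard] at h
    simpa [nsmul_eq_mul] using h
  refine le_trans ?_ total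
  -- the purely numerical inequality
  have hKma : K = m + a := by omega
  have hmla : m = l + a := by omega
  have haNm : a ≤ n - m := by omega
  have hlm : l ≤ m := hm
  have hma : m - l = a := by omega
  have N1 : n ^ K ≤ K ^ a * l ^ l * m ^ a *
      (n.choose m * (m.choose l * (n - m).choose a)) := by
    calc n ^ K = n ^ m * n ^ a := by rw [hKma, pow_add]
      _ ≤ (m ^ m * n.choose m) * ((2 * (n - m)) ^ a) := by
          exact Nat.mul_le_mul (pow_le_pow_mul_choose hmn)
            (Nat.pow_le_pow_left (by omega) a)
      _ = (m ^ l * m ^ a * n.choose m) * (2 ^ a * (n - m) ^ a) := by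
          rw [← pow_add, ← hmla, mul_pow]
      _ ≤ ((l ^ l * m.choose l) * m ^ a * n.choose m) *
            (2 ^ a * (a ^ a * (n - m).choose a)) := by
          exact Nat.mul_le_mul
            (Nat.mul_le_mul_right _ (Nat.mul_le_mul_right _ (pow_le_pow_mul_choose hlm)))
            (Nat.mul_le_mul_left _ (pow_le_pow_mul_choose haNm))
      _ = (2 * a) ^ a * l ^ l * m ^ a * (n.choose m * (m.choose l * (n - m).choose a)) := by
          ring
      _ ≤ K ^ a * l ^ l * m ^ a * (n.choose m * (m.choose l * (n - m).choose a)) := by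
          exact Nat.mul_le_mul_right _ (Nat.mul_le_mul_right _ (Nat.mul_le_mul_right _
            (Nat.pow_le_pow_left (by omega) a)))
  have hDpos : (0 : ℝ) < ((K : ℕ) : ℝ) ^ a * ((l : ℕ) : ℝ) ^ l * (m : ℝ) ^ a := by
    have h1 : (0 : ℝ) < (K : ℝ) := by exact_mod_cast (by omega : 0 < K)
    have h2 : (0 : ℝ) < (l : ℝ) := by exact_mod_cast (by omega : 0 < l)
    have h3 : (0 : ℝ) < (m : ℝ) := by exact_mod_cast (by omega : 0 < m)
    positivity
  rw [div_le_iff₀ hDpos]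
  have N1R : (n : ℝ) ^ K ≤ ((K : ℝ) ^ a * (l : ℝ) ^ l * (m : ℝ) ^ a) *
      ((n.choose m : ℝ) * ((m.choose l : ℝ) * ((n - m).choose a : ℝ))) := by
    exact_mod_cast N1
  have hαle := hα.le
  calc (n : ℝ) ^ K * α
      ≤ (((K : ℝ) ^ a * (l : ℝ) ^ l * (m : ℝ) ^ a) *
          ((n.choose m : ℝ) * ((m.choose l : ℝ) * ((n - m).choose a : ℝ)))) * α := by
        exact mul_le_mul_of_nonneg_right N1R hαle
    _ = (n.choose m : ℝ) * (α * ((m.choose l : ℝ) * ((n - m).choose (m - l) : ℝ))) *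
          ((K : ℝ) ^ a * (l : ℝ) ^ l * (m : ℝ) ^ a) := by
        rw [hma]; ring
end
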